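/- View R as a right A-module via r·a := r·i(a), let R* be the set of right A-linear maps f : R → A, a right R-module via (f·r)(s) = f(r·s), and set (R*)^R = {f ∈ R* | f·r = f·i(χ(r)) for all r ∈ R}, which equals {f ∈ R* | f(r·s) = f(i(χ(r))·s) for all r, s ∈ R}. Then the map j : A → (R*)^R defined by j(a)(r) = a·χ(r) is a bijection, its inverse sends f to f(1_R), and j(a·b) = j(a)·i(b) for all a ∈ A and b ∈ B (so j is an isomorphism of right B-modules). -/
import Mathlib


/-!
`R* = Hom_A(R,A)` (right `A`-linear maps, where `R` is a right `A`-module via `r·a = r * i a`),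
with right `R`-action `(f·r)(s) = f (r * s)`.  The invariants
`(R*)^R = {f | f·r = f·i(χ r) for all r}` are isomorphic to `A` via `j(a)(r) = a * χ r`,
with inverse `f ↦ f 1`, and `j` is right `B`-linear: `j (a*b) = j a · i b` for `b ∈ B`.
-/

theorem dual_invariants_iso
    {A R : Type*} [Ring A] [Ring R] (i : A →+* R) (χ : R → A)
    (hadd : ∀ r s : R, χ (r + s) = χ r + χ s)
    (h1 : ∀ (r : R) (a : A), χ (r * i a) = χ r * a)
    (h2 : ∀ r s : R, χ (i (χ r) * s) = χ (r * s))
    (h3 : χ 1 = 1)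
    (B : Set A) (hB : B = {b : A | ∀ r : R, b * χ r = χ (i b * r)})
    -- `Rstar` : the right A-linear maps R → A
    (Rstar : Set (R → A))
    (hRstar : Rstar = {f : R → A | (∀ r s : R, f (r + s) = f r + f s) ∧
      (∀ (r : R) (a : A), f (r * i a) = f r * a)})
    -- the invariants (R*)^R : f·r = f·i(χ r) for all r, i.e. f (r*s) = f (i (χ r) * s)
    (inv : Set (R → A))
    (hinv : inv = {f ∈ Rstar | ∀ r s : R, f (r * s) = f (i (χ r) * s)})
    (j : A → R → A) (hj : ∀ (a : A) (r : R), j a r = a * χ r) :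
    -- the two descriptions of the invariants coincide
    (inv = {f ∈ Rstar | ∀ r s : R, f (r * s) = f (i (χ r) * s)}) ∧
    -- j takes values in the invariants
    (∀ a : A, j a ∈ inv) ∧
    -- j is injective
    (∀ a a' : A, j a = j a' → a = a') ∧
    -- j is surjective onto the invariants, with inverse f ↦ f 1
    (∀ f ∈ inv, j (f 1) = f) ∧
    (∀ a : A, j a 1 = a) ∧
    -- j is right B-linear : j (a * b) = (j a) · i b
    (∀ (a : A), ∀ b ∈ B, ∀ r : R, j (a * b) r = j a (i b * r)) := by
  subst hinv hB hRstar
  refine ⟨rfl, ?_, ?_, ?_, ?_, ?_⟩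
  · intro a
    refine ⟨⟨fun r s => by rw [hj, hj, hj, hadd, mul_add],
      fun r b => by rw [hj, hj, h1, mul_assoc]⟩, fun r s => by rw [hj, hj, h2]⟩
  · intro a a' h
    have := congrFun h 1
    rwa [hj, hj, h3, mul_one, mul_one] at this
  · intro f hf
    funext r
    have h4 : f r = f (i (χ r)) := by
      have := hf.2 r 1
      rwa [mul_one, mul_one] at this
    rw [hj, h4]
    have : f (1 * i (χ r)) = f 1 * χ r := hf.1.2 1 (χ r)
    rw [one_mul] at this; exact this.symm
  · intro a; rw [hj, h3, mul_one]
  · intro a b hb r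
    rw [hj, hj, mul_assoc, hb r]
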